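/- arXiv:1504.06360 — 2 statements merged into one kernel-verified Lean document; each statement's English description precedes it below -/
import Mathlib

section
/- Let C be a p×p Hermitian matrix, z ∈ ℂ with Im(z) > 0, and write C = Σ_{k=1}^p e_k h_k*, where h_k* is the k-th row of C. Suppose for each k that R_k(z) := (D_k - zI)⁻¹ exists, where D_k is C with its k-th row replaced by zeros, and that 1 + h_k* R_k(z) e_k ≠ 0. Then the Stieltjes transform s(z) = (1/p) Tr((C - zI)⁻¹) satisfies s(z) = -(1/(z p)) Σ_{k=1}^p 1/(1 + h_k* R_k(z) e_k). -/
open Matrix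

/-! Since `C - zI` differs from `Dₖ - zI` only in its `k`-th row, `C - zI = (Dₖ - zI) + eₖ hₖᵀ`,
and Sherman–Morrison gives `(C - zI)⁻¹ eₖ = (1 + hₖᵀ Rₖ eₖ)⁻¹ Rₖ eₖ`; these columns exhibit the
inverse of `C - zI`. The `k`-th row of `Dₖ - zI` is `-z eₖᵀ`, hence `(Rₖ)ₖₖ = -1/z`, and
summing the diagonal of `(C - zI)⁻¹` gives the trace. -/

namespace Matrix

variable {n K : Type*} [DecidableEq n] [Field K]

theorem updateRow_zero_add_vecMulVec_single (C : Matrix n n K) (k : n) :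
    C.updateRow k 0 + vecMulVec (Pi.single k 1) (C k) = C := by
  ext i j
  by_cases h : i = k
  · subst h; simp [vecMulVec_apply]
  · simp [vecMulVec_apply, h]

variable [Fintype n]

theorem add_vecMulVec_mulVec_smul_inv_mulVec {B : Matrix n n K} (hB : IsUnit B.det)
    (u v : n → K) (hden : 1 + v ⬝ᵥ (B⁻¹ *ᵥ u) ≠ 0) :
    (B + vecMulVec u v) *ᵥ ((1 + v ⬝ᵥ (B⁻¹ *ᵥ u))⁻¹ • (B⁻¹ *ᵥ u)) = u := by
  have hcol : (B + vecMulVec u v) *ᵥ (B⁻¹ *ᵥ u) = (1 + v ⬝ᵥ (B⁻¹ *ᵥ u)) • u := by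
    rw [add_mulVec, mulVec_mulVec, mul_nonsing_inv _ hB, one_mulVec, vecMulVec_mulVec,
      op_smul_eq_smul, add_smul, one_smul]
  rw [mulVec_smul, hcol, smul_smul, inv_mul_cancel₀ hden, one_smul]

theorem inv_eq_transpose_of_mulVec_eq_single {A : Matrix n n K} {x : n → n → K}
    (hx : ∀ k, A *ᵥ x k = Pi.single k 1) : A⁻¹ = (of x)ᵀ := by
  refine inv_eq_right_inv (ext_of_mulVec_single fun k => ?_)
  rw [← mulVec_mulVec, mulVec_single_one, one_mulVec]
  exact hx k

theorem inv_apply_self_of_row_eq_smul_single {B : Matrix n n K} (hB : IsUnit B.det) {k : n}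
    {c : K} (hrow : B.row k = c • Pi.single k 1) : B⁻¹ k k = c⁻¹ := by
  have hsingle : c • (Pi.single k 1 ᵥ* B⁻¹) = Pi.single k 1 := by
    rw [← smul_vecMul, ← hrow, ← single_one_vecMul, vecMul_vecMul,
      mul_nonsing_inv _ hB, vecMul_one]
  refine eq_inv_of_mul_eq_one_right ?_
  simpa [single_one_vecMul] using congrFun hsingle k

theorem trace_inv_sub_smul_one_eq_sum_updateRow (C : Matrix n n K) (z : K)
    (hinv : ∀ k, IsUnit (C.updateRow k 0 - z • 1).det)
    (hden : ∀ k, 1 + C k ⬝ᵥ ((C.updateRow k 0 - z • 1)⁻¹ *ᵥ Pi.single k 1) ≠ 0) :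
    trace (C - z • 1)⁻¹ =
      ∑ k, (-z)⁻¹ * (1 + C k ⬝ᵥ ((C.updateRow k 0 - z • 1)⁻¹ *ᵥ Pi.single k 1))⁻¹ := by
  have hsplit : ∀ k, C - z • 1 = (C.updateRow k 0 - z • 1) + vecMulVec (Pi.single k 1) (C k) :=
    fun k => by rw [sub_add_eq_add_sub, updateRow_zero_add_vecMulVec_single]
  have hcol : ∀ k, (C - z • 1) *ᵥ
      ((1 + C k ⬝ᵥ ((C.updateRow k 0 - z • 1)⁻¹ *ᵥ Pi.single k 1))⁻¹ •
        ((C.updateRow k 0 - z • 1)⁻¹ *ᵥ Pi.single k 1)) = Pi.single k 1 := fun k => by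
    rw [hsplit k]
    exact add_vecMulVec_mulVec_smul_inv_mulVec (hinv k) _ _ (hden k)
  have hdiag : ∀ k, (C.updateRow k 0 - z • 1)⁻¹ k k = (-z)⁻¹ := fun k => by
    refine inv_apply_self_of_row_eq_smul_single (hinv k) ?_
    ext j
    by_cases h : j = k
    · subst h; simp
    · simp [h, Ne.symm h]
  rw [inv_eq_transpose_of_mulVec_eq_single hcol, trace]
  refine Finset.sum_congr rfl fun k _ => ?_
  simp [hdiag, mul_comm]

end Matrix

theorem stieltjes_rowwise_decomposition_general (p : ℕ) (C : Matrix (Fin p) (Fin p) ℂ)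
    (z : ℂ)
    (D : Fin p → Matrix (Fin p) (Fin p) ℂ)
    (hD : ∀ k i j, D k i j = if i = k then 0 else C i j)
    (hinv : ∀ k, IsUnit (D k - z • (1 : Matrix (Fin p) (Fin p) ℂ)).det)
    (hden : ∀ k, 1 + (fun j => C k j) ⬝ᵥ
      ((D k - z • (1 : Matrix (Fin p) (Fin p) ℂ))⁻¹ *ᵥ Pi.single k 1) ≠ 0) :
    (1 / p : ℂ) * Matrix.trace ((C - z • (1 : Matrix (Fin p) (Fin p) ℂ))⁻¹) =
      -(1 / (z * p)) * ∑ k, (1 + (fun j => C k j) ⬝ᵥ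
        ((D k - z • (1 : Matrix (Fin p) (Fin p) ℂ))⁻¹ *ᵥ Pi.single k 1))⁻¹ := by
  obtain rfl : D = fun k => C.updateRow k 0 := by
    ext k i j
    simp [hD, updateRow_apply]
  rw [trace_inv_sub_smul_one_eq_sum_updateRow C z hinv hden, ← Finset.mul_sum, inv_neg,
    one_div, one_div, mul_inv]
  ring

/-- Row-by-row resolvent expansion of the Stieltjes transform: writing `C = ∑ₖ eₖ hₖ*`
with `hₖ*` the `k`-th row of `C`, and `Dₖ` the matrix `C` with its `k`-th row zeroed out,
the Stieltjes transform `s(z) = (1/p) Tr((C - zI)⁻¹)` satisfies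
`s(z) = -(1/(zp)) ∑ₖ 1/(1 + hₖ* Rₖ(z) eₖ)`. -/
theorem stieltjes_rowwise_decomposition (p : ℕ) (C : Matrix (Fin p) (Fin p) ℂ)
    (hC : C.IsHermitian) (z : ℂ) (hz : 0 < z.im)
    (D : Fin p → Matrix (Fin p) (Fin p) ℂ)
    (hD : ∀ k i j, D k i j = if i = k then 0 else C i j)
    (hinv : ∀ k, IsUnit (D k - z • (1 : Matrix (Fin p) (Fin p) ℂ)).det)
    (hden : ∀ k, 1 + (fun j => C k j) ⬝ᵥ
      ((D k - z • (1 : Matrix (Fin p) (Fin p) ℂ))⁻¹ *ᵥ Pi.single k 1) ≠ 0) :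
    (1 / p : ℂ) * Matrix.trace ((C - z • (1 : Matrix (Fin p) (Fin p) ℂ))⁻¹) =
      -(1 / (z * p)) * ∑ k, (1 + (fun j => C k j) ⬝ᵥ
        ((D k - z • (1 : Matrix (Fin p) (Fin p) ℂ))⁻¹ *ᵥ Pi.single k 1))⁻¹ :=
  stieltjes_rowwise_decomposition_general p C z D hD hinv hden
end

section
/- Let A and B be p×p Hermitian matrices with empirical spectral distributions F^A and F^B (F^A(x) = (1/p)·#{eigenvalues of A that are ≤ x}, counted with multiplicity). Then sup_x |F^A(x) - F^B(x)| ≤ (1/p)·rank(A - B). -/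
/-!
Let `U` be spanned by the eigenvectors of `A` with eigenvalue `≤ x` and `V` by those of `B` with
eigenvalue `> x`. On `U` the quadratic form of `A` is at most `x‖v‖²`, on `V \ {0}` that of `B`
exceeds `x‖v‖²`, and the two forms agree on `ker (A - B)`; hence `U ⊓ ker (A - B)` meets `V`
trivially. Since `dim (U ⊓ ker (A - B)) ≥ dim U - rank (A - B)`, counting dimensions gives
`#{λᴬ ≤ x} - rank (A - B) ≤ p - #{λᴮ > x} = #{λᴮ ≤ x}`, and symmetrically with `A`, `B` swapped.
-/

open Finset Module
open scoped InnerProductSpace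

theorem Submodule.finrank_le_finrank_inf_ker_add_finrank_range {K V W : Type*} [DivisionRing K]
    [AddCommGroup V] [Module K V] [AddCommGroup W] [Module K W] [FiniteDimensional K V]
    (U : Submodule K V) (f : V →ₗ[K] W) :
    finrank K U ≤ finrank K ↥(U ⊓ LinearMap.ker f) + finrank K (LinearMap.range f) := by
  have h₁ := Submodule.finrank_sup_add_finrank_inf_eq U (LinearMap.ker f)
  have h₂ := (U ⊔ LinearMap.ker f).finrank_le
  have h₃ := f.finrank_range_add_finrank_ker
  omega

namespace OrthonormalBasis

variable {𝕜 E ι : Type*} [RCLike 𝕜] [NormedAddCommGroup E] [InnerProductSpace 𝕜 E] [Fintype ι]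
  (b : OrthonormalBasis ι 𝕜 E)

theorem inner_eq_zero_of_mem_span_image {s : Set ι} {v : E}
    (hv : v ∈ Submodule.span 𝕜 (b '' s)) {i : ι} (hi : i ∉ s) : ⟪b i, v⟫_𝕜 = 0 := by
  obtain ⟨l, hl, rfl⟩ := (Finsupp.mem_span_image_iff_linearCombination 𝕜).1 hv
  exact inner_eq_zero_symm.1 (b.orthonormal.inner_finsupp_eq_zero hi hl)

theorem finrank_span_image (p : ι → Prop) [DecidablePred p] :
    finrank 𝕜 (Submodule.span 𝕜 (b '' {i | p i})) = #{i | p i} := by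
  rw [Set.image_eq_range]
  exact (finrank_span_eq_card (b.orthonormal.linearIndependent.comp _ Subtype.val_injective)).trans
    (Fintype.card_subtype p)

variable {b} {T : E →ₗ[𝕜] E} {μ : ι → ℝ}

theorem re_inner_map_self_eq_sum (hT : ∀ i, T (b i) = (μ i : 𝕜) • b i) (v : E) :
    RCLike.re ⟪v, T v⟫_𝕜 = ∑ i, μ i * ‖⟪b i, v⟫_𝕜‖ ^ 2 := by
  have hTv : T v = ∑ i, ((μ i : 𝕜) * ⟪b i, v⟫_𝕜) • b i := by
    conv_lhs => rw [← b.sum_repr' v]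
    simp [hT, smul_smul, mul_comm]
  rw [hTv, inner_sum, map_sum]
  refine sum_congr rfl fun i _ => ?_
  rw [inner_smul_right, mul_assoc, ← inner_conj_symm v (b i), RCLike.mul_conj]
  norm_cast

theorem re_inner_map_self_le (hT : ∀ i, T (b i) = (μ i : 𝕜) • b i) {x : ℝ} {v : E}
    (hv : v ∈ Submodule.span 𝕜 (b '' {i | μ i ≤ x})) : RCLike.re ⟪v, T v⟫_𝕜 ≤ x * ‖v‖ ^ 2 := by
  rw [re_inner_map_self_eq_sum hT, ← b.sum_sq_norm_inner_right, mul_sum]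
  refine sum_le_sum fun i _ => ?_
  by_cases hi : μ i ≤ x
  · gcongr
  · simp [b.inner_eq_zero_of_mem_span_image hv hi]

theorem lt_re_inner_map_self (hT : ∀ i, T (b i) = (μ i : 𝕜) • b i) {x : ℝ} {v : E}
    (hv : v ∈ Submodule.span 𝕜 (b '' {i | x < μ i})) (hv₀ : v ≠ 0) :
    x * ‖v‖ ^ 2 < RCLike.re ⟪v, T v⟫_𝕜 := by
  rw [re_inner_map_self_eq_sum hT, ← b.sum_sq_norm_inner_right, mul_sum]
  obtain ⟨j, hj⟩ : ∃ j, ⟪b j, v⟫_𝕜 ≠ 0 := by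
    by_contra! h
    exact hv₀ (b.sum_repr' v ▸ by simp [h])
  have hμj : x < μ j := by
    by_contra hμj
    exact hj (b.inner_eq_zero_of_mem_span_image hv hμj)
  refine sum_lt_sum (fun i _ => ?_) ⟨j, mem_univ j, ?_⟩
  · by_cases hi : x < μ i
    · gcongr
    · simp [b.inner_eq_zero_of_mem_span_image hv hi]
  · exact mul_lt_mul_of_pos_right hμj (by positivity)

end OrthonormalBasis

section SpectralCount

variable {𝕜 E ι κ : Type*} [RCLike 𝕜] [NormedAddCommGroup E] [InnerProductSpace 𝕜 E]
  [Fintype ι] [Fintype κ] {T S : E →ₗ[𝕜] E} {b : OrthonormalBasis ι 𝕜 E}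
  {c : OrthonormalBasis κ 𝕜 E} {μ : ι → ℝ} {ν : κ → ℝ}

theorem disjoint_span_eigenvectors_inf_ker_sub (hT : ∀ i, T (b i) = (μ i : 𝕜) • b i)
    (hS : ∀ j, S (c j) = (ν j : 𝕜) • c j) (x : ℝ) :
    Disjoint (Submodule.span 𝕜 (b '' {i | μ i ≤ x}) ⊓ LinearMap.ker (T - S))
      (Submodule.span 𝕜 (c '' {j | x < ν j})) := by
  rw [Submodule.disjoint_def]
  rintro v ⟨hvT, hv_ker⟩ hvS
  by_contra hv₀
  have hTS : T v = S v := sub_eq_zero.1 hv_ker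
  have hle := b.re_inner_map_self_le hT hvT
  have hlt := c.lt_re_inner_map_self hS hvS hv₀
  rw [hTS] at hle
  linarith

theorem card_le_card_add_finrank_range_sub (hT : ∀ i, T (b i) = (μ i : 𝕜) • b i)
    (hS : ∀ j, S (c j) = (ν j : 𝕜) • c j) (x : ℝ) :
    #{i | μ i ≤ x} ≤ #{j | ν j ≤ x} + finrank 𝕜 (LinearMap.range (T - S)) := by
  have := Module.Finite.of_basis b.toBasis
  have hdisj := Submodule.finrank_add_finrank_le_of_disjoint
    (disjoint_span_eigenvectors_inf_ker_sub hT hS x)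
  have hker := (Submodule.span 𝕜 (b '' {i | μ i ≤ x})).finrank_le_finrank_inf_ker_add_finrank_range
    (T - S)
  have hdimT := b.finrank_span_image (μ · ≤ x)
  have hdimS := c.finrank_span_image (x < ν ·)
  have hcard : #{j | ν j ≤ x} + #{j | x < ν j} = finrank 𝕜 E := by
    rw [finrank_eq_card_basis c.toBasis, ← card_univ,
      ← card_filter_add_card_filter_not (s := univ) (fun j => ν j ≤ x)]
    simp only [not_le]
  omega

end SpectralCount

theorem Matrix.rank_neg {m n R : Type*} [Fintype n] [CommRing R] (A : Matrix m n R) :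
    (-A).rank = A.rank := by
  simpa using A.rank_smul_of_mem_nonZeroDivisors (isUnit_one.neg.mem_nonZeroDivisors (M₀ := R))

namespace Matrix.IsHermitian

variable {𝕜 n : Type*} [RCLike 𝕜] [Fintype n] [DecidableEq n] {A B : Matrix n n 𝕜}

theorem toEuclideanLin_eigenvectorBasis (hA : A.IsHermitian) (i : n) :
    toEuclideanLin A (hA.eigenvectorBasis i) = (hA.eigenvalues i : 𝕜) • hA.eigenvectorBasis i := by
  ext j
  simpa [toLpLin_apply] using congrFun (hA.mulVec_eigenvectorBasis i) j

theorem card_eigenvalues_le_le_card_add_rank_sub (hA : A.IsHermitian) (hB : B.IsHermitian)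
    (x : ℝ) : #{i | hA.eigenvalues i ≤ x} ≤ #{i | hB.eigenvalues i ≤ x} + (A - B).rank := by
  rw [(A - B).rank_eq_finrank_range_toLin (PiLp.basisFun 2 𝕜 n) (PiLp.basisFun 2 𝕜 n),
    ← toLpLin_eq_toLin, map_sub]
  exact card_le_card_add_finrank_range_sub hA.toEuclideanLin_eigenvectorBasis
    hB.toEuclideanLin_eigenvectorBasis x

end Matrix.IsHermitian

/-- Rank inequality for empirical spectral distributions of Hermitian matrices:
`sup_x |F^A(x) - F^B(x)| ≤ rank(A - B)/p`. -/
theorem esd_rank_inequality (p : ℕ) (A B : Matrix (Fin p) (Fin p) ℂ)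
    (hA : A.IsHermitian) (hB : B.IsHermitian) :
    ∀ x : ℝ,
      |((Finset.univ.filter fun i => hA.eigenvalues i ≤ x).card : ℝ) / p -
        ((Finset.univ.filter fun i => hB.eigenvalues i ≤ x).card : ℝ) / p| ≤
      ((A - B).rank : ℝ) / p := by
  intro x
  have hAB := hA.card_eigenvalues_le_le_card_add_rank_sub hB x
  have hBA := hB.card_eigenvalues_le_le_card_add_rank_sub hA x
  rw [← neg_sub, Matrix.rank_neg] at hBA
  rw [div_sub_div_same, abs_div, Nat.abs_cast]
  gcongr
  exact abs_sub_le_iff.2 ⟨sub_le_iff_le_add'.2 (mod_cast hAB), sub_le_iff_le_add'.2 (mod_cast hBA)⟩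
end
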